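/- For every dynamic logic program P without strong negation, the extended WS-models, the extended RD-models, the WS-models and the RD-models of P all coincide: WS'(P) = RD'(P) = WSd(P) = RD(P). -/

import Mathlib

namespace RuleUpdates

/-- Objective literal: an atom (a natural number) or its strong negation. -/
inductive OLit where
  | pos : ℕ → OLit
  | neg : ℕ → OLit
deriving DecidableEq

/-- Strong negation on objective literals (with ¬¬p identified with p). -/
def OLit.compl : OLit → OLit
  | .pos p => .neg p
  | .neg p => .pos p

/-- Literal: an objective literal or its default negation (not not l = l). -/
inductive Lit where
  | obj : OLit → Lit
  | ndef : OLit → Lit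
deriving DecidableEq

/-- Extended rule: a head literal and a finite set of body literals. -/
structure Rule where
  head : Lit
  body : Finset Lit

/-- Interpretation: a consistent set of objective literals. -/
def Interp (J : Set OLit) : Prop :=
  ∀ p : ℕ, ¬ (OLit.pos p ∈ J ∧ OLit.neg p ∈ J)

/-- Satisfaction of a literal. -/
def satLit (J : Set OLit) : Lit → Prop
  | .obj l => l ∈ J
  | .ndef l => l ∉ J

/-- Satisfaction of a set of body literals. -/
def satBody (J : Set OLit) (B : Finset Lit) : Prop :=
  ∀ L ∈ B, satLit J L

/-- Satisfaction of a rule. -/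
def satRule (J : Set OLit) (π : Rule) : Prop :=
  satBody J π.body → satLit J π.head

/-- J is a model of a program. -/
def isModel (J : Set OLit) (P : Set Rule) : Prop :=
  ∀ π ∈ P, satRule J π

/-- J* = J ∪ { not l | l ∈ ℒ ∖ J }, as a set of literals. -/
def star (J : Set OLit) : Set Lit :=
  {L | ∃ l : OLit, (L = Lit.obj l ∧ l ∈ J) ∨ (L = Lit.ndef l ∧ l ∉ J)}

/-- def(J) = { (not l.) | l ∈ ℒ ∖ J }. -/
def defFacts (J : Set OLit) : Set Rule :=
  {π | ∃ l : OLit, l ∉ J ∧ π = ⟨Lit.ndef l, ∅⟩}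

/-- S (a set of literals) is closed under program P, all literals
treated as distinct propositional atoms. -/
def closedUnder (P : Set Rule) (S : Set Lit) : Prop :=
  ∀ π ∈ P, (π.body : Set Lit) ⊆ S → π.head ∈ S

/-- least(P): the least model of P when all literals are treated as
distinct propositional atoms. -/
def leastModel (P : Set Rule) : Set Lit :=
  ⋂₀ {S | closedUnder P S}

/-- Stable model of an extended program: J* = least(P ∪ def(J)). -/
def isStableModel (P : Set Rule) (J : Set OLit) : Prop :=
  Interp J ∧ star J = leastModel (P ∪ defFacts J)

/-- Level of a literal, with ℓ(not l) = ℓ(l). -/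
def litLevel (ℓ : OLit → ℕ) : Lit → ℕ
  | .obj l => ℓ l
  | .ndef l => ℓ l

/-- ℓ↑(S): the maximal level of a literal in the finite set S. -/
def supLevel (ℓ : OLit → ℕ) (S : Finset Lit) : ℕ :=
  S.sup (litLevel ℓ)

/-- ℓ↓(S): the minimal level of a literal in the finite set S. -/
noncomputable def infLevel (ℓ : OLit → ℕ) (S : Finset Lit) : ℕ :=
  sInf (litLevel ℓ '' (S : Set Lit))

/-- Well-supported model of an extended program w.r.t. a level mapping ℓ. -/
def isWSModelWith (P : Set Rule) (J : Set OLit) (ℓ : OLit → ℕ) : Prop :=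
  isModel J P ∧
    ∀ l ∈ J, ∃ π ∈ P, π.head = Lit.obj l ∧ satBody J π.body ∧
      supLevel ℓ π.body < ℓ l

/-- Well-supported model of an extended program. -/
def isWSModel (P : Set Rule) (J : Set OLit) : Prop :=
  Interp J ∧ ∃ ℓ : OLit → ℕ, isWSModelWith P J ℓ

/-- con(L): the literals in conflict with L. -/
def con : Lit → Finset Lit
  | .obj l => {Lit.ndef l, Lit.obj l.compl}
  | .ndef l => {Lit.obj l}

/-- ρ(P): all rules occurring in the components of the DLP. -/
def allRules {n : ℕ} (P : Fin n → Set Rule) : Set Rule :=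
  {π | ∃ i : Fin n, π ∈ P i}

/-- The rule π ∈ P i is rejected w.r.t. the set of literals S:
some later σ with conflicting head has its body included in S. -/
def rejIn {n : ℕ} (P : Fin n → Set Rule) (S : Set Lit) (i : Fin n) (π : Rule) : Prop :=
  ∃ j : Fin n, i < j ∧ ∃ σ ∈ P j, σ.head ∈ con π.head ∧ (σ.body : Set Lit) ⊆ S

/-- rem(P, S) = ρ(P) ∖ rej(P, S), as a set of component-indexed rules. -/
def remSet {n : ℕ} (P : Fin n → Set Rule) (S : Set Lit) : Set (Fin n × Rule) :=
  {x | x.2 ∈ P x.1 ∧ ¬ rejIn P S x.1 x.2}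

/-- The operator T_{P,J}. -/
def TOp {n : ℕ} (P : Fin n → Set Rule) (J : Set OLit) (S : Set Lit) : Set Lit :=
  {L | ((∃ x ∈ remSet P (star J), x.2.head = L ∧ (x.2.body : Set Lit) ⊆ S) ∨
        (∃ l : OLit, l ∉ J ∧ L = Lit.ndef l)) ∧
       ¬ ∃ σ ∈ remSet P S, σ.2.head ∈ con L ∧ (σ.2.body : Set Lit) ⊆ star J}

/-- Iterates of T_{P,J} starting from ∅. -/
def TIter {n : ℕ} (P : Fin n → Set Rule) (J : Set OLit) : ℕ → Set Lit
  | 0 => ∅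
  | k + 1 => TOp P J (TIter P J k)

/-- Extended RD-model of a DLP: J* = ⋃_{k≥0} T_{P,J}^k(∅). -/
def isExtRD {n : ℕ} (P : Fin n → Set Rule) (J : Set OLit) : Prop :=
  Interp J ∧ star J = ⋃ k : ℕ, TIter P J k

/-- rej^ℓ(P, J): π ∈ P i is rejected w.r.t. J and the level mapping ℓ. -/
def rejLvl {n : ℕ} (P : Fin n → Set Rule) (J : Set OLit) (ℓ : OLit → ℕ)
    (i : Fin n) (π : Rule) : Prop :=
  ∃ j : Fin n, i < j ∧ ∃ σ ∈ P j, σ.head ∈ con π.head ∧ satBody J σ.body ∧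
    supLevel ℓ σ.body < infLevel ℓ (con π.head)

/-- Extended WS-model of a DLP. -/
def isExtWS {n : ℕ} (P : Fin n → Set Rule) (J : Set OLit) : Prop :=
  Interp J ∧ ∃ ℓ : OLit → ℕ,
    (∀ i : Fin n, ∀ π ∈ P i, ¬ rejLvl P J ℓ i π → satRule J π) ∧
    (∀ l ∈ J, ∃ x ∈ remSet P (star J), x.2.head = Lit.obj l ∧ satBody J x.2.body ∧
      supLevel ℓ x.2.body < ℓ l)

/-- A program is acyclic w.r.t. a level mapping ℓ. -/
def acyclicWrt (Q : Set Rule) (ℓ : OLit → ℕ) : Prop :=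
  (∀ l : OLit, ℓ l = ℓ l.compl) ∧ ∀ π ∈ Q, supLevel ℓ π.body < litLevel ℓ π.head

/-- The objective literal underlying a literal. -/
def Lit.olit : Lit → OLit
  | .obj l => l
  | .ndef l => l

/-- An objective literal is an atom (no strong negation). -/
def OLit.isAtom : OLit → Prop
  | .pos _ => True
  | .neg _ => False

/-- A rule without strong negation. -/
def noStrongRule (π : Rule) : Prop :=
  π.head.olit.isAtom ∧ ∀ L ∈ π.body, L.olit.isAtom

/-- A DLP without strong negation. -/
def noStrongDLP {n : ℕ} (P : Fin n → Set Rule) : Prop :=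
  ∀ i : Fin n, ∀ π ∈ P i, noStrongRule π

/-- Default negation on literals: not H(π), with double negation absorbed. -/
def Lit.swap : Lit → Lit
  | .obj l => .ndef l
  | .ndef l => .obj l

/-- J* for interpretations over atoms: J ∪ { not p | p ∈ 𝒜 ∖ J }. -/
def starA (J : Set OLit) : Set Lit :=
  {L | ∃ p : ℕ, (L = Lit.obj (OLit.pos p) ∧ OLit.pos p ∈ J) ∨
                 (L = Lit.ndef (OLit.pos p) ∧ OLit.pos p ∉ J)}

/-- Rej(P, J): π ∈ P i is rejected by some σ ∈ P j with i ≤ j whose head is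
not H(π) and whose body is satisfied by J. -/
def RejRD {n : ℕ} (P : Fin n → Set Rule) (J : Set OLit) (i : Fin n) (π : Rule) : Prop :=
  ∃ j : Fin n, i ≤ j ∧ ∃ σ ∈ P j, σ.head = π.head.swap ∧ satBody J σ.body

/-- Def(P, J) = { (not p.) | p ∈ 𝒜, no π ∈ ρ(P) with H(π) = p and J ⊨ B(π) }. -/
def DefRD {n : ℕ} (P : Fin n → Set Rule) (J : Set OLit) : Set Rule :=
  {ρ | ∃ p : ℕ, ρ = ⟨Lit.ndef (OLit.pos p), ∅⟩ ∧
    ¬ ∃ i : Fin n, ∃ π ∈ P i, π.head = Lit.obj (OLit.pos p) ∧ satBody J π.body}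

/-- RD-model of a DLP without strong negation. -/
def isRD {n : ℕ} (P : Fin n → Set Rule) (J : Set OLit) : Prop :=
  (∀ l ∈ J, ∃ p : ℕ, l = OLit.pos p) ∧
  starA J = leastModel ({π | ∃ i : Fin n, π ∈ P i ∧ ¬ RejRD P J i π} ∪ DefRD P J)

/-- Rej^ℓ(P, J) for DLPs without strong negation. -/
def RejWSd {n : ℕ} (P : Fin n → Set Rule) (J : Set OLit) (ℓ : OLit → ℕ)
    (i : Fin n) (π : Rule) : Prop :=
  ∃ j : Fin n, i < j ∧ ∃ σ ∈ P j, σ.head = π.head.swap ∧ satBody J σ.body ∧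
    supLevel ℓ σ.body < litLevel ℓ π.head

/-- WS-model of a DLP without strong negation. -/
def isWSd {n : ℕ} (P : Fin n → Set Rule) (J : Set OLit) : Prop :=
  (∀ l ∈ J, ∃ p : ℕ, l = OLit.pos p) ∧ ∃ ℓ : OLit → ℕ,
    (∀ i : Fin n, ∀ π ∈ P i, ¬ RejWSd P J ℓ i π → satRule J π) ∧
    (∀ l ∈ J, ∃ i : Fin n, ∃ π ∈ P i, ¬ RejWSd P J ℓ i π ∧ π.head = Lit.obj l ∧
      satBody J π.body ∧ supLevel ℓ π.body < litLevel ℓ π.head)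

/-!
Without strong negation the only rule head in `con L` is `L.swap`, so the extended rejection
notions reduce to the regular ones once the level mapping gives `¬p` the level of `p`.

Everything is compared with WS-models. Given a WS-model, induction on its level mapping shows that
each literal true in `J` lies in `least(·)`, resp. in all late enough iterates of `T_{P,J}`. The
supports come from the WS-model; a support overridden by a later rule with true body is replaced by
a later one, because the overriding rule has a false head and hence is rejected by a lower-level
rule; with finitely many components this stops. Conversely, the stage at which a true literal
first enters the least-model iteration, resp. the `T_{P,J}`-iteration, is a level mapping for
which `J` is a WS-model.
-/

open Filter

open Classical in
noncomputable def trueLit (J : Set OLit) (l : OLit) : Lit :=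
  if l ∈ J then .obj l else .ndef l

section Literals

variable {J : Set OLit} {l : OLit} {L M : Lit} {B : Finset Lit} {ℓ : OLit → ℕ}

@[simp] lemma satLit_obj : satLit J (.obj l) ↔ l ∈ J := Iff.rfl
@[simp] lemma satLit_ndef : satLit J (.ndef l) ↔ l ∉ J := Iff.rfl
@[simp] lemma olit_obj : (Lit.obj l).olit = l := rfl
@[simp] lemma olit_ndef : (Lit.ndef l).olit = l := rfl
@[simp] lemma swap_obj : (Lit.obj l).swap = .ndef l := rfl
@[simp] lemma swap_ndef : (Lit.ndef l).swap = .obj l := rfl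
@[simp] lemma olit_swap (L : Lit) : L.swap.olit = L.olit := by cases L <;> rfl
@[simp] lemma swap_swap (L : Lit) : L.swap.swap = L := by cases L <;> rfl
@[simp] lemma satLit_swap : satLit J L.swap ↔ ¬ satLit J L := by cases L <;> simp

@[simp] lemma mem_star : L ∈ star J ↔ satLit J L := by
  cases L <;> simp [star]

lemma coe_subset_star : (B : Set Lit) ⊆ star J ↔ satBody J B := by
  simp [Set.subset_def, satBody]

lemma OLit.isAtom_iff : l.isAtom ↔ ∃ p, l = .pos p := by
  cases l <;> simp [OLit.isAtom]

lemma mem_starA : L ∈ starA J ↔ L.olit.isAtom ∧ satLit J L := by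
  rcases L with (l | l) | (l | l) <;> simp [starA, OLit.isAtom]

lemma starA_subset_star : starA J ⊆ star J :=
  fun _ hL => mem_star.2 (mem_starA.1 hL).2

lemma interp_of_forall_eq_pos (hJ : ∀ l ∈ J, ∃ p, l = OLit.pos p) : Interp J :=
  fun p ⟨_, hneg⟩ => by obtain ⟨q, hq⟩ := hJ _ hneg; cases hq

@[simp] lemma olit_trueLit : (trueLit J l).olit = l := by
  unfold trueLit; split <;> rfl

lemma satLit_trueLit : satLit J (trueLit J l) := by
  unfold trueLit; split <;> simpa

lemma trueLit_olit (hL : satLit J L) : trueLit J L.olit = L := by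
  cases L <;> simp_all [trueLit]

lemma swap_mem_con (L : Lit) : L.swap ∈ con L := by
  cases L <;> simp [con]

lemma eq_swap_of_mem_con (hL : L.olit.isAtom) (hM : M.olit.isAtom) (h : M ∈ con L) :
    M = L.swap := by
  obtain ⟨p, hp⟩ := OLit.isAtom_iff.1 hL
  cases L <;> simp only [olit_obj, olit_ndef] at hp <;> subst hp <;>
    simp only [con, Finset.mem_insert, Finset.mem_singleton] at h
  · rcases h with rfl | rfl
    · rfl
    · simp [OLit.compl, OLit.isAtom] at hM
  · simpa using h

@[simp] lemma litLevel_eq (ℓ : OLit → ℕ) (L : Lit) : litLevel ℓ L = ℓ L.olit := by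
  cases L <;> rfl

lemma litLevel_le_supLevel (hL : L ∈ B) : litLevel ℓ L ≤ supLevel ℓ B :=
  Finset.le_sup hL

lemma infLevel_con_le (ℓ : OLit → ℕ) (L : Lit) : infLevel ℓ (con L) ≤ litLevel ℓ L :=
  Nat.sInf_le ⟨L.swap, swap_mem_con L, by simp⟩

end Literals

def atomize (ℓ : OLit → ℕ) : OLit → ℕ
  | .pos p => ℓ (.pos p)
  | .neg p => ℓ (.pos p)

section Atomize

variable {ℓ : OLit → ℕ} {l : OLit} {B : Finset Lit}

lemma atomize_of_isAtom (hl : l.isAtom) : atomize ℓ l = ℓ l := by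
  obtain ⟨p, rfl⟩ := OLit.isAtom_iff.1 hl; rfl

lemma supLevel_atomize (hB : ∀ L ∈ B, L.olit.isAtom) :
    supLevel (atomize ℓ) B = supLevel ℓ B :=
  Finset.sup_congr rfl fun L hL => by simp [atomize_of_isAtom (hB L hL)]

lemma infLevel_con_atomize (L : Lit) :
    infLevel (atomize ℓ) (con L) = litLevel (atomize ℓ) L := by
  rcases L with (l | l) | (l | l) <;>
    simp [infLevel, con, atomize, OLit.compl, Set.image_insert_eq]

end Atomize

lemma exists_and_of_push_up {ι α : Type*} [Preorder ι] [WellFoundedGT ι]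
    {Q G : ι → α → Prop}
    (step : ∀ i a, Q i a → ¬ G i a → ∃ j > i, ∃ b, Q j b) {i : ι} {a : α} (h : Q i a) :
    ∃ j b, Q j b ∧ G j b := by
  induction i using WellFoundedGT.induction generalizing a with
  | _ i ih =>
    by_cases hG : G i a
    · exact ⟨i, a, h, hG⟩
    · obtain ⟨j, hij, b, hb⟩ := step i a h hG
      exact ih j hij hb

section Rejection

variable {n : ℕ} {P : Fin n → Set Rule} {J : Set OLit} {ℓ : OLit → ℕ} {i : Fin n}
  {π : Rule}

def WellSupports (P : Fin n → Set Rule) (J : Set OLit) (ℓ : OLit → ℕ) (c : Lit) (i : Fin n)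
    (π : Rule) : Prop :=
  π ∈ P i ∧ π.head = c ∧ satBody J π.body ∧ supLevel ℓ π.body < litLevel ℓ c

def ModelsUnrejected (P : Fin n → Set Rule) (J : Set OLit) (ℓ : OLit → ℕ) : Prop :=
  ∀ i, ∀ π ∈ P i, ¬ RejWSd P J ℓ i π → satRule J π

def WellSupported (P : Fin n → Set Rule) (J : Set OLit) (ℓ : OLit → ℕ) : Prop :=
  ∀ l ∈ J, ∃ i, ∃ π ∈ P i, ¬ RejWSd P J ℓ i π ∧ π.head = Lit.obj l ∧
    satBody J π.body ∧ supLevel ℓ π.body < litLevel ℓ π.head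

lemma isWSd_iff : isWSd P J ↔
    (∀ l ∈ J, ∃ p, l = OLit.pos p) ∧ ∃ ℓ, ModelsUnrejected P J ℓ ∧ WellSupported P J ℓ :=
  Iff.rfl

lemma ModelsUnrejected.exists_wellSupports_swap (hM : ModelsUnrejected P J ℓ) (hπ : π ∈ P i)
    (hb : satBody J π.body) (hh : ¬ satLit J π.head) :
    ∃ j, i < j ∧ ∃ σ, WellSupports P J ℓ π.head.swap j σ := by
  by_contra hne
  refine hh (hM i π hπ ?_ hb)
  rintro ⟨j, hij, σ, hσ, hσh, hσb, hσl⟩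
  exact hne ⟨j, hij, σ, hσ, hσh, hσb, by simpa using hσl⟩

lemma WellSupported.exists_wellSupports (hS : WellSupported P J ℓ) {l : OLit} (hl : l ∈ J) :
    ∃ i π, WellSupports P J ℓ (.obj l) i π := by
  obtain ⟨i, π, hπ, -, hh, hb, hs⟩ := hS l hl
  exact ⟨i, π, hπ, hh, hb, hh ▸ hs⟩

lemma WellSupported.exists_rule (hS : WellSupported P J ℓ) {l : OLit} (hl : l ∈ J) :
    ∃ i, ∃ π ∈ P i, π.head = .obj l ∧ satBody J π.body := by
  obtain ⟨i, π, hπ, -, hh, hb, -⟩ := hS l hl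
  exact ⟨i, π, hπ, hh, hb⟩

lemma rejIn_star_of_rejWSd : RejWSd P J ℓ i π → rejIn P (star J) i π :=
  fun ⟨j, hij, σ, hσ, hσh, hσb, _⟩ =>
    ⟨j, hij, σ, hσ, hσh ▸ swap_mem_con _, coe_subset_star.2 hσb⟩

lemma rejRD_of_rejWSd : RejWSd P J ℓ i π → RejRD P J i π :=
  fun ⟨j, hij, σ, hσ, hσh, hσb, _⟩ => ⟨j, hij.le, σ, hσ, hσh, hσb⟩

lemma rejRD_of_rejIn_star (h : noStrongDLP P) (hπ : π ∈ P i) :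
    rejIn P (star J) i π → RejRD P J i π :=
  fun ⟨j, hij, σ, hσ, hσc, hσb⟩ =>
    ⟨j, hij.le, σ, hσ, eq_swap_of_mem_con (h i π hπ).1 (h j σ hσ).1 hσc,
      coe_subset_star.1 hσb⟩

lemma rejWSd_of_rejLvl (h : noStrongDLP P) (hπ : π ∈ P i) :
    rejLvl P J ℓ i π → RejWSd P J ℓ i π :=
  fun ⟨j, hij, σ, hσ, hσc, hσb, hσl⟩ =>
    ⟨j, hij, σ, hσ, eq_swap_of_mem_con (h i π hπ).1 (h j σ hσ).1 hσc, hσb,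
      hσl.trans_le (infLevel_con_le ℓ π.head)⟩

lemma rejLvl_atomize_of_rejWSd (h : noStrongDLP P) (hπ : π ∈ P i) :
    RejWSd P J ℓ i π → rejLvl P J (atomize ℓ) i π := by
  rintro ⟨j, hij, σ, hσ, hσh, hσb, hσl⟩
  refine ⟨j, hij, σ, hσ, hσh ▸ swap_mem_con _, hσb, ?_⟩
  rwa [infLevel_con_atomize, supLevel_atomize (h j σ hσ).2, litLevel_eq,
    atomize_of_isAtom (h i π hπ).1, ← litLevel_eq ℓ]

/-- A rule overriding the support has a false head, so it is rejected by a still later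
support. -/
lemma ModelsUnrejected.exists_wellSupports_not_rejRD (hM : ModelsUnrejected P J ℓ) {c : Lit}
    (hc : satLit J c) (hs : WellSupports P J ℓ c i π) :
    ∃ i' π', WellSupports P J ℓ c i' π' ∧ ¬ RejRD P J i' π' := by
  refine exists_and_of_push_up (fun i π hs hrej => ?_) hs
  obtain ⟨j, hij, σ, hσ, hσh, hσb⟩ := not_not.1 hrej
  rw [hs.2.1] at hσh
  obtain ⟨k, hjk, τ, hτ⟩ := hM.exists_wellSupports_swap hσ hσb (by simpa [hσh])
  exact ⟨k, hij.trans_lt hjk, τ, by simpa [hσh] using hτ⟩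

theorem isExtWS_iff_isWSd (h : noStrongDLP P) : isExtWS P J ↔ isWSd P J := by
  constructor
  · rintro ⟨-, ℓ, hM, hS⟩
    refine ⟨fun l hl => ?_, ℓ, fun i π hπ hnr => hM i π hπ (mt (rejWSd_of_rejLvl h hπ) hnr),
      fun l hl => ?_⟩
    · obtain ⟨x, hx, hh, -⟩ := hS l hl
      exact OLit.isAtom_iff.1 (by simpa [hh] using (h x.1 x.2 hx.1).1)
    · obtain ⟨x, hx, hh, hb, hs⟩ := hS l hl
      exact ⟨x.1, x.2, hx.1, mt rejIn_star_of_rejWSd hx.2, hh, hb, by simpa [hh] using hs⟩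
  · intro hW
    obtain ⟨hat, ℓ, hM, hS⟩ := isWSd_iff.1 hW
    refine ⟨interp_of_forall_eq_pos hat, atomize ℓ,
      fun i π hπ hnr => hM i π hπ (mt (rejLvl_atomize_of_rejWSd h hπ) hnr), fun l hl => ?_⟩
    obtain ⟨i, π, hs⟩ := hS.exists_wellSupports hl
    obtain ⟨i, π, ⟨hπ, hh, hb, hlev⟩, hnr⟩ := hM.exists_wellSupports_not_rejRD (by simpa) hs
    refine ⟨(i, π), ⟨hπ, mt (rejRD_of_rejIn_star h hπ) hnr⟩, hh, hb, ?_⟩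
    rwa [supLevel_atomize (h i π hπ).2,
      atomize_of_isAtom (by simpa [hh] using (h i π hπ).1)]

end Rejection

noncomputable def firstStage (T : ℕ → Set Lit) (J : Set OLit) (l : OLit) : ℕ :=
  sInf {k | trueLit J l ∈ T k}

section FirstStage

variable {T : ℕ → Set Lit} {J : Set OLit} {l : OLit} {L : Lit} {B : Finset Lit} {m : ℕ}

lemma firstStage_le (hT : T m ⊆ star J) (hL : L ∈ T m) : firstStage T J L.olit ≤ m :=
  Nat.sInf_le (show trueLit J L.olit ∈ T m by rwa [trueLit_olit (mem_star.1 (hT hL))])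

lemma supLevel_firstStage_lt (hT : T m ⊆ star J) (hB : (B : Set Lit) ⊆ T m) :
    supLevel (firstStage T J) B < m + 1 :=
  Nat.lt_succ_of_le <| Finset.sup_le fun L hL => by simpa using firstStage_le hT (hB hL)

lemma exists_firstStage_eq_succ (h0 : T 0 = ∅) (hl : ∃ k, trueLit J l ∈ T k) :
    ∃ m, firstStage T J l = m + 1 ∧ trueLit J l ∈ T (m + 1) ∧ trueLit J l ∉ T m := by
  have hmem : trueLit J l ∈ T (firstStage T J l) := Nat.sInf_mem hl
  obtain ⟨m, hm⟩ : ∃ m, firstStage T J l = m + 1 :=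
    Nat.exists_eq_succ_of_ne_zero fun h => by simp [h, h0] at hmem
  exact ⟨m, hm, hm ▸ hmem, Nat.notMem_of_lt_sInf (show m < firstStage T J l by omega)⟩

end FirstStage

def leastModelStage (Q : Set Rule) : ℕ → Set Lit
  | 0 => ∅
  | k + 1 => leastModelStage Q k ∪
      {L | ∃ π ∈ Q, π.head = L ∧ (π.body : Set Lit) ⊆ leastModelStage Q k}

section LeastModel

variable {Q : Set Rule} {S : Set Lit}

lemma leastModel_closedUnder (Q : Set Rule) : closedUnder Q (leastModel Q) :=
  fun π hπ hb _ hS => hS π hπ fun _ hL => hb hL _ hS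

lemma leastModel_subset (hS : closedUnder Q S) : leastModel Q ⊆ S :=
  Set.sInter_subset_of_mem hS

lemma monotone_leastModelStage (Q : Set Rule) : Monotone (leastModelStage Q) :=
  monotone_nat_of_le_succ fun _ => Set.subset_union_left

lemma leastModelStage_subset_leastModel (Q : Set Rule) (k : ℕ) :
    leastModelStage Q k ⊆ leastModel Q := by
  induction k with
  | zero => exact Set.empty_subset _
  | succ k ih =>
    rintro L (hL | ⟨π, hπ, rfl, hb⟩)
    exacts [ih hL, leastModel_closedUnder Q π hπ (hb.trans ih)]

lemma leastModel_eq_iUnion (Q : Set Rule) : leastModel Q = ⋃ k, leastModelStage Q k := by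
  refine (leastModel_subset fun π hπ hb => ?_).antisymm
    (Set.iUnion_subset (leastModelStage_subset_leastModel Q))
  have hev : ∀ L ∈ π.body, ∀ᶠ k in atTop, L ∈ leastModelStage Q k := fun L hL => by
    obtain ⟨k, hk⟩ := Set.mem_iUnion.1 (hb hL)
    exact eventually_atTop.2 ⟨k, fun k' hk' => monotone_leastModelStage Q hk' hk⟩
  obtain ⟨k, hk⟩ := ((eventually_all_finset _).2 hev).exists
  exact Set.mem_iUnion.2 ⟨k + 1, Or.inr ⟨π, hπ, rfl, hk⟩⟩

end LeastModel

/-- The program `[ρ(P) ∖ Rej(P, J)] ∪ Def(P, J)` whose least model defines RD-models. -/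
def rdProgram {n : ℕ} (P : Fin n → Set Rule) (J : Set OLit) : Set Rule :=
  {π | ∃ i, π ∈ P i ∧ ¬ RejRD P J i π} ∪ DefRD P J

section WellSupportedModel

variable {n : ℕ} {P : Fin n → Set Rule} {J : Set OLit} {ℓ : OLit → ℕ}

lemma coe_subset_of_supLevel_lt {S : Set Lit} {B : Finset Lit} {m : ℕ}
    (hB : ∀ L ∈ B, L.olit.isAtom) (hJ : satBody J B) (hlt : supLevel ℓ B < m)
    (hS : ∀ q, ℓ (.pos q) < m → trueLit J (.pos q) ∈ S) : (B : Set Lit) ⊆ S := by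
  intro L hL
  obtain ⟨q, hq⟩ := OLit.isAtom_iff.1 (hB L hL)
  rw [← trueLit_olit (hJ L hL), hq]
  exact hS q (by simpa [hq] using (litLevel_le_supLevel (ℓ := ℓ) hL).trans_lt hlt)

lemma exists_wellSupports_trueLit_not_rejRD (hM : ModelsUnrejected P J ℓ)
    (hS : WellSupported P J ℓ) {p : ℕ}
    (hder : ∃ i, ∃ π ∈ P i, π.head = .obj (.pos p) ∧ satBody J π.body) :
    ∃ i π, WellSupports P J ℓ (trueLit J (.pos p)) i π ∧ ¬ RejRD P J i π := by
  suffices ∃ i π, WellSupports P J ℓ (trueLit J (.pos p)) i π by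
    obtain ⟨i, π, hs⟩ := this
    exact hM.exists_wellSupports_not_rejRD satLit_trueLit hs
  by_cases hp : OLit.pos p ∈ J
  · simpa [trueLit, hp] using hS.exists_wellSupports hp
  · obtain ⟨i, π, hπ, hh, hb⟩ := hder
    obtain ⟨j, -, σ, hσ⟩ := hM.exists_wellSupports_swap hπ hb (by simpa [hh])
    exact ⟨j, σ, by simpa [trueLit, hp, hh] using hσ⟩

lemma trueLit_mem_leastModel (h : noStrongDLP P) (hM : ModelsUnrejected P J ℓ)
    (hS : WellSupported P J ℓ) (p : ℕ) : trueLit J (.pos p) ∈ leastModel (rdProgram P J) := by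
  induction p using (measure fun p => ℓ (.pos p)).wf.induction with
  | _ p ih =>
  by_cases hder : ∃ i, ∃ π ∈ P i, π.head = .obj (.pos p) ∧ satBody J π.body
  · obtain ⟨i, π, ⟨hπ, hh, hb, hs⟩, hnr⟩ :=
      exists_wellSupports_trueLit_not_rejRD hM hS hder
    exact hh ▸ leastModel_closedUnder _ π (Or.inl ⟨i, hπ, hnr⟩)
      (coe_subset_of_supLevel_lt (h i π hπ).2 hb (by simpa using hs) ih)
  · have hp : OLit.pos p ∉ J := fun hp => hder (hS.exists_rule hp)
    simpa [trueLit, hp] using leastModel_closedUnder (rdProgram P J) ⟨.ndef (.pos p), ∅⟩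
      (Or.inr ⟨p, rfl, hder⟩) (by simp)

end WellSupportedModel

section RD

variable {n : ℕ} {P : Fin n → Set Rule} {J : Set OLit}

lemma isRD_iff : isRD P J ↔
    (∀ l ∈ J, ∃ p, l = OLit.pos p) ∧ starA J = leastModel (rdProgram P J) :=
  Iff.rfl

theorem isRD_of_isWSd (h : noStrongDLP P) (hW : isWSd P J) : isRD P J := by
  obtain ⟨hat, ℓ, hM, hS⟩ := isWSd_iff.1 hW
  refine isRD_iff.2 ⟨hat, Set.Subset.antisymm (fun L hL => ?_) (leastModel_subset ?_)⟩
  · obtain ⟨hL, hsat⟩ := mem_starA.1 hL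
    obtain ⟨p, hp⟩ := OLit.isAtom_iff.1 hL
    simpa [← hp, trueLit_olit hsat] using trueLit_mem_leastModel h hM hS p
  · rintro π (⟨i, hπ, hnr⟩ | ⟨p, rfl, hnd⟩) hb
    · have hb' : satBody J π.body := fun L hL => (mem_starA.1 (hb hL)).2
      exact mem_starA.2 ⟨(h i π hπ).1, hM i π hπ (mt rejRD_of_rejWSd hnr) hb'⟩
    · exact mem_starA.2 ⟨trivial, fun hp => hnd (hS.exists_rule hp)⟩

lemma exists_rdProgram_rule_of_isRD (hR : isRD P J) {L : Lit} (hL : L.olit.isAtom)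
    (hsat : satLit J L) :
    ∃ τ ∈ rdProgram P J, τ.head = L ∧ satBody J τ.body ∧
      supLevel (firstStage (leastModelStage (rdProgram P J)) J) τ.body <
        litLevel (firstStage (leastModelStage (rdProgram P J)) J) L := by
  have hEq := (isRD_iff.1 hR).2
  have hT : ∀ k, leastModelStage (rdProgram P J) k ⊆ star J := fun k =>
    (leastModelStage_subset_leastModel _ k).trans (hEq ▸ starA_subset_star)
  have hmem : trueLit J L.olit ∈ ⋃ k, leastModelStage (rdProgram P J) k := by
    rw [← leastModel_eq_iUnion, ← hEq, trueLit_olit hsat]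
    exact mem_starA.2 ⟨hL, hsat⟩
  obtain ⟨m, hm, hnew, hold⟩ := exists_firstStage_eq_succ rfl (Set.mem_iUnion.1 hmem)
  rw [trueLit_olit hsat] at hnew hold
  obtain ⟨τ, hτ, hh, hb⟩ := hnew.resolve_left hold
  exact ⟨τ, hτ, hh, coe_subset_star.1 (hb.trans (hT m)), by
    simpa [hm] using supLevel_firstStage_lt (hT m) hb⟩

theorem isWSd_of_isRD (h : noStrongDLP P) (hR : isRD P J) : isWSd P J := by
  refine ⟨hR.1, firstStage (leastModelStage (rdProgram P J)) J, fun i π hπ hnr hb => ?_,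
    fun l hl => ?_⟩
  · by_contra hns
    obtain ⟨τ, hτ | ⟨p, rfl, hnd⟩, hh, hτb, hτl⟩ :=
      exists_rdProgram_rule_of_isRD hR (by simpa using (h i π hπ).1) (satLit_swap.2 hns)
    · obtain ⟨j, hτ, hτnr⟩ := hτ
      rcases lt_or_ge i j with hij | hji
      · exact hnr ⟨j, hij, τ, hτ, hh, hτb, by simpa using hτl⟩
      · exact hτnr ⟨i, hji, π, hπ, by simp [hh], hb⟩
    · exact hnd ⟨i, π, hπ, by simpa using congrArg Lit.swap hh.symm, hb⟩
  · obtain ⟨τ, ⟨i, hτ, hnr⟩ | ⟨p, rfl, -⟩, hh, hb, hs⟩ :=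
      exists_rdProgram_rule_of_isRD hR (L := .obj l)
        (by obtain ⟨p, rfl⟩ := hR.1 l hl; trivial) hl
    · exact ⟨i, τ, hτ, mt rejRD_of_rejWSd hnr, hh, hb, by rwa [hh]⟩
    · cases hh

theorem isRD_iff_isWSd (h : noStrongDLP P) : isRD P J ↔ isWSd P J :=
  ⟨isWSd_of_isRD h, isRD_of_isWSd h⟩

end RD

section ExtRD

variable {n : ℕ} {P : Fin n → Set Rule} {J : Set OLit} {ℓ : OLit → ℕ} {S : Set Lit}
  {T : ℕ → Set Lit}

lemma isAtom_of_obj_mem_TOp (h : noStrongDLP P) {l : OLit} (hl : Lit.obj l ∈ TOp P J S) :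
    l.isAtom := by
  obtain ⟨⟨x, hx, hh, -⟩ | ⟨_, -, hh⟩, -⟩ := hl
  · simpa [hh] using (h x.1 x.2 hx.1).1
  · cases hh

lemma ndef_neg_mem_TOp (h : noStrongDLP P) {q : ℕ} (hq : OLit.neg q ∉ J) :
    Lit.ndef (.neg q) ∈ TOp P J S := by
  refine ⟨Or.inr ⟨_, hq, rfl⟩, fun ⟨x, hx, hc, _⟩ => ?_⟩
  simp only [con, Finset.mem_singleton] at hc
  simpa [hc, OLit.isAtom] using (h x.1 x.2 hx.1).1

lemma TOp_subset_star (hM : ModelsUnrejected P J ℓ) (hS : S ⊆ star J) :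
    TOp P J S ⊆ star J := by
  rintro L ⟨⟨x, ⟨hx, hnr⟩, rfl, hb⟩ | ⟨l, hl, rfl⟩, -⟩
  · exact mem_star.2 <|
      hM x.1 x.2 hx (mt rejIn_star_of_rejWSd hnr) (coe_subset_star.1 (hb.trans hS))
  · simpa

lemma TIter_subset_star (hM : ModelsUnrejected P J ℓ) (k : ℕ) : TIter P J k ⊆ star J := by
  induction k with
  | zero => exact Set.empty_subset _
  | succ k ih => exact TOp_subset_star hM ih

lemma eventually_coe_subset_of_supLevel_lt {B : Finset Lit} {m : ℕ}
    (hB : ∀ L ∈ B, L.olit.isAtom) (hJ : satBody J B) (hlt : supLevel ℓ B < m)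
    (hlow : ∀ q, ℓ (.pos q) < m → ∀ᶠ k in atTop, trueLit J (.pos q) ∈ T k) :
    ∀ᶠ k in atTop, (B : Set Lit) ⊆ T k :=
  (eventually_all_finset B).2 (coe_subset_of_supLevel_lt (S := {L | ∀ᶠ k in atTop, L ∈ T k})
    hB hJ hlt hlow)

/-- One rejecting rule serves all rules of `P j` with head `c`, so only finitely many bodies have
to stay in `T k` eventually. -/
lemma eventually_rejIn (h : noStrongDLP P) (hM : ModelsUnrejected P J ℓ) {c : Lit}
    (hc : ¬ satLit J c)
    (hlow : ∀ q, ℓ (.pos q) < litLevel ℓ c → ∀ᶠ k in atTop, trueLit J (.pos q) ∈ T k) :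
    ∀ᶠ k in atTop, ∀ j, ∀ σ ∈ P j, σ.head = c → satBody J σ.body → rejIn P (T k) j σ := by
  refine eventually_all.2 fun j => ?_
  by_cases hj : ∃ σ ∈ P j, σ.head = c ∧ satBody J σ.body
  · obtain ⟨σ, hσ, hh, hb⟩ := hj
    obtain ⟨k, hjk, τ, hτ, hτh, hτb, hτl⟩ := hM.exists_wellSupports_swap hσ hb (hh ▸ hc)
    filter_upwards [eventually_coe_subset_of_supLevel_lt (h k τ hτ).2 hτb
      (by simpa [hh] using hτl) hlow] with m hm σ' _ hh' _
    exact ⟨k, hjk, τ, hτ, by rw [hτh, hh, hh']; exact swap_mem_con c, hm⟩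
  · exact Eventually.of_forall fun _ σ hσ hh hb => absurd ⟨σ, hσ, hh, hb⟩ hj

lemma eventually_trueLit_mem_TOp (h : noStrongDLP P) (hM : ModelsUnrejected P J ℓ)
    (hS : WellSupported P J ℓ) {p : ℕ}
    (hlow : ∀ q, ℓ (.pos q) < ℓ (.pos p) → ∀ᶠ k in atTop, trueLit J (.pos q) ∈ T k) :
    ∀ᶠ k in atTop, trueLit J (.pos p) ∈ TOp P J (T k) := by
  have hderive : ∀ᶠ k in atTop,
      (∃ x ∈ remSet P (star J), x.2.head = trueLit J (.pos p) ∧ (x.2.body : Set Lit) ⊆ T k) ∨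
        ∃ l, l ∉ J ∧ trueLit J (.pos p) = .ndef l := by
    by_cases hp : OLit.pos p ∈ J
    · obtain ⟨i, π, ⟨hπ, hh, hb, hs⟩, hnr⟩ :=
        exists_wellSupports_trueLit_not_rejRD hM hS (hS.exists_rule hp)
      filter_upwards [eventually_coe_subset_of_supLevel_lt (h i π hπ).2 hb
        (by simpa using hs) hlow] with k hk
      exact Or.inl ⟨(i, π), ⟨hπ, mt (rejRD_of_rejIn_star h hπ) hnr⟩, hh, hk⟩
    · exact Eventually.of_forall fun _ => Or.inr ⟨_, hp, by simp [trueLit, hp]⟩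
  filter_upwards [hderive, eventually_rejIn h hM (c := (trueLit J (.pos p)).swap)
    (by simpa using satLit_trueLit) (by simpa using hlow)] with k hd hrej
  refine ⟨hd, fun ⟨x, ⟨hx, hnr⟩, hc, hb⟩ => hnr (hrej x.1 x.2 hx ?_ (coe_subset_star.1 hb))⟩
  exact eq_swap_of_mem_con (by simp [OLit.isAtom]) (h x.1 x.2 hx).1 hc

lemma eventually_trueLit_mem_TIter (h : noStrongDLP P) (hM : ModelsUnrejected P J ℓ)
    (hS : WellSupported P J ℓ) (p : ℕ) : ∀ᶠ k in atTop, trueLit J (.pos p) ∈ TIter P J k := by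
  induction p using (measure fun p => ℓ (.pos p)).wf.induction with
  | _ p ih =>
  rw [← map_add_atTop_eq_nat 1, eventually_map]
  exact eventually_trueLit_mem_TOp h hM hS ih

theorem isExtRD_of_isWSd (h : noStrongDLP P) (hW : isWSd P J) : isExtRD P J := by
  obtain ⟨hat, ℓ, hM, hS⟩ := isWSd_iff.1 hW
  refine ⟨interp_of_forall_eq_pos hat,
    Set.Subset.antisymm (fun L hL => ?_) (Set.iUnion_subset (TIter_subset_star hM))⟩
  obtain ⟨l, rfl⟩ : ∃ l, trueLit J l = L := ⟨L.olit, trueLit_olit (mem_star.1 hL)⟩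
  cases l with
  | pos p => exact Set.mem_iUnion.2 (eventually_trueLit_mem_TIter h hM hS p).exists
  | neg q =>
    have hq : OLit.neg q ∉ J := fun hq => by simpa using hat _ hq
    have hneg : trueLit J (.neg q) = .ndef (.neg q) := by simp [trueLit, hq]
    exact Set.mem_iUnion.2 ⟨1, hneg ▸ ndef_neg_mem_TOp h hq⟩

lemma exists_mem_TOp_of_isExtRD (hE : isExtRD P J) {L : Lit} (hL : satLit J L) :
    ∃ m, firstStage (TIter P J) J L.olit = m + 1 ∧ L ∈ TOp P J (TIter P J m) := by
  have hmem : trueLit J L.olit ∈ ⋃ k, TIter P J k := by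
    rw [← hE.2]; exact mem_star.2 satLit_trueLit
  obtain ⟨m, hm, hnew, -⟩ := exists_firstStage_eq_succ rfl (Set.mem_iUnion.1 hmem)
  exact ⟨m, hm, trueLit_olit hL ▸ hnew⟩

theorem isWSd_of_isExtRD (h : noStrongDLP P) (hE : isExtRD P J) : isWSd P J := by
  have hT : ∀ k, TIter P J k ⊆ star J := fun k => hE.2 ▸ Set.subset_iUnion _ k
  refine ⟨fun l hl => ?_, firstStage (TIter P J) J, fun i π hπ hnr hb => ?_, fun l hl => ?_⟩
  · obtain ⟨m, -, hm⟩ := exists_mem_TOp_of_isExtRD hE (L := .obj l) hl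
    exact OLit.isAtom_iff.1 (isAtom_of_obj_mem_TOp h hm)
  · by_contra hns
    obtain ⟨m, hm, -, hblock⟩ := exists_mem_TOp_of_isExtRD hE (satLit_swap.2 hns)
    rw [olit_swap] at hm
    have hrej : rejIn P (TIter P J m) i π := by_contra fun hrem => hblock
      ⟨(i, π), ⟨hπ, hrem⟩, by simpa using swap_mem_con π.head.swap, coe_subset_star.2 hb⟩
    obtain ⟨j, hij, σ, hσ, hc, hσb⟩ := hrej
    exact hnr ⟨j, hij, σ, hσ, eq_swap_of_mem_con (h i π hπ).1 (h j σ hσ).1 hc,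
      coe_subset_star.1 (hσb.trans (hT m)),
      by simpa [hm] using supLevel_firstStage_lt (hT m) hσb⟩
  · obtain ⟨m, hm, ⟨x, hx, hh, hb⟩ | ⟨_, -, hh⟩, -⟩ :=
      exists_mem_TOp_of_isExtRD hE (L := .obj l) hl
    · rw [olit_obj] at hm
      exact ⟨x.1, x.2, hx.1, mt rejIn_star_of_rejWSd hx.2, hh,
        coe_subset_star.1 (hb.trans (hT m)),
        by simpa [hh, hm] using supLevel_firstStage_lt (hT m) hb⟩
    · cases hh

theorem isExtRD_iff_isWSd (h : noStrongDLP P) : isExtRD P J ↔ isWSd P J :=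
  ⟨isWSd_of_isExtRD h, isExtRD_of_isWSd h⟩

end ExtRD

/-- for DLPs without strong negation,
WS'(P) = RD'(P) = WSd(P) = RD(P). -/
theorem extended_semantics_coincide_with_regular (n : ℕ) (P : Fin n → Set Rule)
    (h : noStrongDLP P) :
    {J : Set OLit | isExtWS P J} = {J : Set OLit | isExtRD P J} ∧
    {J : Set OLit | isExtWS P J} = {J : Set OLit | isWSd P J} ∧
    {J : Set OLit | isExtWS P J} = {J : Set OLit | isRD P J} := by
  refine ⟨Set.ext fun J => ?_, Set.ext fun J => isExtWS_iff_isWSd h, Set.ext fun J => ?_⟩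
  · exact (isExtWS_iff_isWSd h).trans (isExtRD_iff_isWSd h).symm
  · exact (isExtWS_iff_isWSd h).trans (isRD_iff_isWSd h).symm

end RuleUpdates
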